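/- arXiv:2412.03395 — 8 statements merged into one kernel-verified Lean document; each statement's English description precedes it below -/
import Mathlib

section
/- The collection of twelve 3-clauses {a,b,c}, {d,e,f}, {g,h,i}, {a,d,g}, {b,e,i}, {c,f,h}, {a,e,h}, {b,f,g}, {c,d,i}, {a,f,i}, {b,d,h}, {c,e,g} over the nine Boolean variables a,...,i is not nae-satisfiable: there is no assignment β : {a,...,i} → Bool such that every listed clause contains both a variable set to true and a variable set to false. -/
/-- A positive 3-clause {x,y,z} is nae-satisfied if the three values are not all equal. -/
def nae3 (x y z : Bool) : Prop := ¬ (x = y ∧ y = z)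

/-- The twelve clauses over a,…,i from Proposition 1 are not nae-satisfiable. -/
theorem no_nae_assignment_twelve_clauses :
    ¬ ∃ a b c d e f g h i : Bool,
      nae3 a b c ∧ nae3 d e f ∧ nae3 g h i ∧
      nae3 a d g ∧ nae3 b e i ∧ nae3 c f h ∧
      nae3 a e h ∧ nae3 b f g ∧ nae3 c d i ∧
      nae3 a f i ∧ nae3 b d h ∧ nae3 c e g := by
  simp only [nae3]
  decide
end

section
/- Consider the gadget EQ_lin(x1,x2,x3,x4) consisting of the twelve positive 3-clauses {a,d,x3}, {b,e,x2}, {c,f,x4}, {a,c,x1}, {b,d,x4}, {e,f,x3}, {a,e,x4}, {b,f,x1}, {c,d,x2}, {a,f,x2}, {b,c,x3}, {d,e,x1} over variables {x1,x2,x3,x4} ∪ {a,b,c,d,e,f}. A truth assignment β on {x1,x2,x3,x4} extends to an assignment on all ten variables that nae-satisfies all twelve clauses if and only if β(x1) = β(x2) = β(x3) = β(x4). -/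
/-- The gadget EQ_lin(x1,x2,x3,x4): an assignment of the xᵢ extends to the
    auxiliary variables a,…,f nae-satisfying all twelve clauses iff all xᵢ
    receive the same truth value. -/
theorem eqlin_gadget (x1 x2 x3 x4 : Bool) :
    (∃ a b c d e f : Bool,
      nae3 a d x3 ∧ nae3 b e x2 ∧ nae3 c f x4 ∧
      nae3 a c x1 ∧ nae3 b d x4 ∧ nae3 e f x3 ∧
      nae3 a e x4 ∧ nae3 b f x1 ∧ nae3 c d x2 ∧
      nae3 a f x2 ∧ nae3 b c x3 ∧ nae3 d e x1)
    ↔ (x1 = x2 ∧ x2 = x3 ∧ x3 = x4) := by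
  cases x1 <;> cases x2 <;> cases x3 <;> cases x4 <;> simp only [nae3] <;>
    constructor <;> decide
end

section
/- There is no assignment β of Boolean values to the ten variables x1,x2,x3,x4,a,b,c,d,e,f with β(x1) = true and β(x2) = false that nae-satisfies all twelve clauses of EQ_lin(x1,x2,x3,x4). -/
/-- No assignment with β(x1) = true and β(x2) = false nae-satisfies all
    twelve clauses of EQ_lin(x1,x2,x3,x4). -/
theorem eqlin_x1_ne_x2 :
    ¬ ∃ (x1 x2 x3 x4 a b c d e f : Bool),
      x1 = true ∧ x2 = false ∧
      nae3 a d x3 ∧ nae3 b e x2 ∧ nae3 c f x4 ∧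
      nae3 a c x1 ∧ nae3 b d x4 ∧ nae3 e f x3 ∧
      nae3 a e x4 ∧ nae3 b f x1 ∧ nae3 c d x2 ∧
      nae3 a f x2 ∧ nae3 b c x3 ∧ nae3 d e x1 := by
  rintro ⟨x1, x2, x3, x4, a, b, c, d, e, f, h⟩
  simp only [nae3] at h
  obtain ⟨h1, h2, hs⟩ := h
  subst h1; subst h2
  cases a <;> cases b <;> cases c <;> cases d <;> cases e <;> cases f <;>
    cases x3 <;> cases x4 <;> simp_all
end

section
/- Consider the gadget EQ(x1,x2,x3,x4) consisting of the fifteen positive 3-clauses {a,h,x2}, {b,d,x4}, {c,e,i}, {f,g,x1}, {a,g,x4}, {b,e,x3}, {d,i,x1}, {c,f,h}, {a,f,x3}, {b,i,x2}, {e,h,x1}, {c,d,g}, {a,b,c}, {d,e,f}, {g,h,i} over variables {x1,x2,x3,x4} ∪ {a,b,c,d,e,f,g,h,i}. A truth assignment β on {x1,x2,x3,x4} extends to an assignment on all thirteen variables that nae-satisfies all fifteen clauses if and only if β(x1) = β(x2) = β(x3) = β(x4). -/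
/-- The gadget EQ(x1,x2,x3,x4): an assignment of the xᵢ extends to the
    auxiliary variables a,…,i nae-satisfying all fifteen clauses iff all xᵢ
    receive the same truth value. -/
theorem eq_gadget (x1 x2 x3 x4 : Bool) :
    (∃ a b c d e f g h i : Bool,
      nae3 a h x2 ∧ nae3 b d x4 ∧ nae3 c e i ∧ nae3 f g x1 ∧
      nae3 a g x4 ∧ nae3 b e x3 ∧ nae3 d i x1 ∧ nae3 c f h ∧
      nae3 a f x3 ∧ nae3 b i x2 ∧ nae3 e h x1 ∧ nae3 c d g ∧
      nae3 a b c ∧ nae3 d e f ∧ nae3 g h i)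
    ↔ (x1 = x2 ∧ x2 = x3 ∧ x3 = x4) := by
  simp only [nae3]
  revert x1 x2 x3 x4
  set_option maxRecDepth 100000 in
  set_option synthInstance.maxSize 100000 in
  set_option synthInstance.maxHeartbeats 1000000 in
  set_option maxHeartbeats 2000000 in
  decide
end

section
/- Let V be a finite set and let C1 and C2 each be a partition of V into 3-element subsets, with C1 and C2 disjoint as collections (no common 3-set). Then the collection C1 ∪ C2 of positive 3-clauses is nae-satisfiable: there exists β : V → Bool such that every clause in C1 ∪ C2 contains both a true and a false variable. -/
/-- A finite set of variables is nae-satisfied by `β` if it contains both a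
    variable set to true and a variable set to false. -/
def naeSat {V : Type*} (β : V → Bool) (c : Finset V) : Prop :=
  (∃ v ∈ c, β v = true) ∧ (∃ v ∈ c, β v = false)

/-- The union of two disjoint partitions of V into 3-element subsets is
    nae-satisfiable. -/
theorem two_disjoint_partitions_nae_satisfiable
    {V : Type*} [Fintype V] [DecidableEq V] (C1 C2 : Finset (Finset V))
    (hcard1 : ∀ c ∈ C1, c.card = 3) (hcard2 : ∀ c ∈ C2, c.card = 3)
    (hpart1 : ∀ x : V, ∃! c, c ∈ C1 ∧ x ∈ c)
    (hpart2 : ∀ x : V, ∃! c, c ∈ C2 ∧ x ∈ c)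
    (hdisj : Disjoint C1 C2) :
    ∃ β : V → Bool, ∀ c ∈ C1 ∪ C2, naeSat β c := by
  classical
  -- the C2-clause containing a given vertex
  set g : V → Finset V := fun x => (hpart2 x).exists.choose with hg
  have hgmem : ∀ x : V, g x ∈ C2 ∧ x ∈ g x := fun x => (hpart2 x).exists.choose_spec
  -- neighbourhoods
  set t : {c // c ∈ C1} → Finset (Finset V) :=
    fun c => C2.filter (fun d => ((c : Finset V) ∩ d).Nonempty) with ht
  -- pairwise disjointness of C1-clauses
  have hdisj1 : ∀ c₁ ∈ C1, ∀ c₂ ∈ C1, c₁ ≠ c₂ → Disjoint c₁ c₂ := by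
    intro c₁ h₁ c₂ h₂ hne
    rw [Finset.disjoint_left]
    intro x hx₁ hx₂
    exact hne (((hpart1 x).unique ⟨h₁, hx₁⟩ ⟨h₂, hx₂⟩))
  have hdisj2 : ∀ c₁ ∈ C2, ∀ c₂ ∈ C2, c₁ ≠ c₂ → Disjoint c₁ c₂ := by
    intro c₁ h₁ c₂ h₂ hne
    rw [Finset.disjoint_left]
    intro x hx₁ hx₂
    exact hne (((hpart2 x).unique ⟨h₁, hx₁⟩ ⟨h₂, hx₂⟩))
  -- Hall's condition
  have hall : ∀ s : Finset {c // c ∈ C1}, s.card ≤ (s.biUnion t).card := by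
    intro s
    set U : Finset V := s.biUnion (fun c => (c : Finset V)) with hU
    have hUcard : U.card = 3 * s.card := by
      rw [hU, Finset.card_biUnion]
      · rw [Finset.sum_congr rfl (fun c hc => hcard1 c.1 c.2), Finset.sum_const, smul_eq_mul,
          mul_comm]
      · intro c₁ _ c₂ _ hne
        exact hdisj1 c₁.1 c₁.2 c₂.1 c₂.2 (fun h => hne (Subtype.ext h))
    have himg : U.image g ⊆ s.biUnion t := by
      intro d hd
      rw [Finset.mem_image] at hd
      obtain ⟨x, hxU, hgx⟩ := hd
      rw [hU, Finset.mem_biUnion] at hxU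
      obtain ⟨c, hcs, hxc⟩ := hxU
      rw [Finset.mem_biUnion]
      refine ⟨c, hcs, ?_⟩
      rw [ht]
      simp only [Finset.mem_filter]
      exact ⟨hgx ▸ (hgmem x).1, ⟨x, Finset.mem_inter.2 ⟨hxc, hgx ▸ (hgmem x).2⟩⟩⟩
    have hcount : U.card ≤ 3 * (U.image g).card := by
      apply Finset.card_le_mul_card_image
      intro d hd
      rw [Finset.mem_image] at hd
      obtain ⟨x, _, hgx⟩ := hd
      calc ({a ∈ U | g a = d} : Finset V).card ≤ d.card := by
            apply Finset.card_le_card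
            intro y hy
            rw [Finset.mem_filter] at hy
            exact hy.2 ▸ (hgmem y).2
        _ = 3 := hcard2 d (hgx ▸ (hgmem x).1)
    have := hcount.trans (Nat.mul_le_mul_left 3 (Finset.card_le_card himg))
    omega
  obtain ⟨f, hfinj, hft⟩ := (Finset.all_card_le_biUnion_card_iff_exists_injective t).1 hall
  have hfC2 : ∀ c, f c ∈ C2 := fun c => (Finset.mem_filter.1 (hft c)).1
  have hfint : ∀ c : {c // c ∈ C1}, ((c : Finset V) ∩ f c).Nonempty :=
    fun c => (Finset.mem_filter.1 (hft c)).2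
  -- cardinalities: C1.card = C2.card
  have huniv1 : (Finset.univ : Finset V) = C1.biUnion (fun c => c) := by
    ext x
    simp only [Finset.mem_univ, Finset.mem_biUnion, true_iff]
    obtain ⟨c, hc, _⟩ := hpart1 x
    exact ⟨c, hc.1, hc.2⟩
  have huniv2 : (Finset.univ : Finset V) = C2.biUnion (fun c => c) := by
    ext x
    simp only [Finset.mem_univ, Finset.mem_biUnion, true_iff]
    obtain ⟨c, hc, _⟩ := hpart2 x
    exact ⟨c, hc.1, hc.2⟩
  have hc1 : Fintype.card V = 3 * C1.card := by
    rw [← Finset.card_univ, huniv1]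
    rw [Finset.card_biUnion (fun c₁ h₁ c₂ h₂ => hdisj1 c₁ h₁ c₂ h₂),
      Finset.sum_congr rfl (fun c hc => hcard1 c hc), Finset.sum_const, smul_eq_mul, mul_comm]
  have hc2 : Fintype.card V = 3 * C2.card := by
    rw [← Finset.card_univ, huniv2]
    rw [Finset.card_biUnion (fun c₁ h₁ c₂ h₂ => hdisj2 c₁ h₁ c₂ h₂),
      Finset.sum_congr rfl (fun c hc => hcard2 c hc), Finset.sum_const, smul_eq_mul, mul_comm]
  have hcardeq : C1.card = C2.card := by omega
  -- f is surjective onto C2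
  have hfsurj : ∀ d ∈ C2, ∃ c : {c // c ∈ C1}, f c = d := by
    have hsub : Finset.univ.image f ⊆ C2 := by
      intro d hd
      rw [Finset.mem_image] at hd
      obtain ⟨c, _, rfl⟩ := hd
      exact hfC2 c
    have hcard : (Finset.univ.image f).card = C2.card := by
      rw [Finset.card_image_of_injective _ hfinj, Finset.card_univ, Fintype.card_coe, hcardeq]
    have heq : Finset.univ.image f = C2 :=
      Finset.eq_of_subset_of_card_le hsub (le_of_eq hcard.symm)
    intro d hd
    rw [← heq, Finset.mem_image] at hd
    obtain ⟨c, _, hc⟩ := hd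
    exact ⟨c, hc⟩
  -- pick the shared variable
  set v : {c // c ∈ C1} → V := fun c => (hfint c).choose with hv
  have hvmem : ∀ c : {c // c ∈ C1}, v c ∈ (c : Finset V) ∧ v c ∈ f c :=
    fun c => Finset.mem_inter.1 (hfint c).choose_spec
  refine ⟨fun x => decide (∃ c, v c = x), ?_⟩
  -- a variable equal to some v c' with v c' in a clause disjoint-partition facts
  intro c hc
  rw [Finset.mem_union] at hc
  rcases hc with hc | hc
  · -- c ∈ C1
    set c' : {c // c ∈ C1} := ⟨c, hc⟩ with hc'
    constructor
    · exact ⟨v c', (hvmem c').1, by simp⟩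
    · have hvc : v c' ∈ c := (hvmem c').1
      have : (c.erase (v c')).Nonempty := by
        rw [← Finset.card_pos, Finset.card_erase_of_mem hvc, hcard1 c hc]
        norm_num
      obtain ⟨x, hx⟩ := this
      refine ⟨x, Finset.mem_of_mem_erase hx, ?_⟩
      simp only [decide_eq_false_iff_not]
      rintro ⟨c'', rfl⟩
      have hxc'' : v c'' ∈ (c'' : Finset V) := (hvmem c'').1
      have : (c'' : Finset V) = c :=
        (hpart1 (v c'')).unique ⟨c''.2, hxc''⟩ ⟨hc, Finset.mem_of_mem_erase hx⟩
      have : c'' = c' := Subtype.ext this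
      rw [this] at hx
      exact Finset.notMem_erase _ _ hx
  · -- c ∈ C2
    obtain ⟨c₀, rfl⟩ := hfsurj c hc
    constructor
    · exact ⟨v c₀, (hvmem c₀).2, by simp⟩
    · have hvc : v c₀ ∈ f c₀ := (hvmem c₀).2
      have : ((f c₀).erase (v c₀)).Nonempty := by
        rw [← Finset.card_pos, Finset.card_erase_of_mem hvc, hcard2 _ hc]
        norm_num
      obtain ⟨x, hx⟩ := this
      refine ⟨x, Finset.mem_of_mem_erase hx, ?_⟩
      simp only [decide_eq_false_iff_not]
      rintro ⟨c'', rfl⟩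
      have hxf : v c'' ∈ f c'' := (hvmem c'').2
      have : f c'' = f c₀ :=
        (hpart2 (v c'')).unique ⟨hfC2 c'', hxf⟩ ⟨hc, Finset.mem_of_mem_erase hx⟩
      have : c'' = c₀ := hfinj this
      rw [this] at hx
      exact Finset.notMem_erase _ _ hx
end

section
/- For a fixed k, let V be a finite set and C1,...,Ck pairwise disjoint partitions of V into 3-element subsets with C = C1 ∪ ... ∪ Ck nae-satisfiable. Define three disjoint copies V(1), V(2), V(3) of V, let C(j) be the corresponding copies of C, and let D = {{x1, x2, x3} : x ∈ V} where xj denotes the copy of x in V(j). Then C(1) ∪ C(2) ∪ C(3) ∪ D is nae-satisfiable. -/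
/-- Tripling construction: if `C = C₁ ∪ ⋯ ∪ C_k` (pairwise disjoint partitions
    of V into 3-sets) is nae-satisfiable, then the union of the three renamed
    copies of C together with the clauses `{x₁, x₂, x₃}` (one per variable) is
    nae-satisfiable.  The j-th copy of a variable x is `(x, j) : V × Fin 3`. -/
theorem tripling_construction_nae_satisfiable
    {V : Type*} [Fintype V] [DecidableEq V] (k : ℕ) (Cs : Fin k → Finset (Finset V))
    (hcard : ∀ i, ∀ c ∈ Cs i, c.card = 3)
    (hpart : ∀ i, ∀ x : V, ∃! c, c ∈ Cs i ∧ x ∈ c)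
    (hdisj : ∀ i j, i ≠ j → Disjoint (Cs i) (Cs j))
    (hsat : ∃ β : V → Bool, ∀ i, ∀ c ∈ Cs i, naeSat β c) :
    ∃ β' : V × Fin 3 → Bool,
      (∀ j : Fin 3, ∀ i, ∀ c ∈ Cs i, naeSat β' (c.image (fun x => (x, j)))) ∧
      (∀ x : V, naeSat β' ({(x, 0), (x, 1), (x, 2)} : Finset (V × Fin 3))) := by
  obtain ⟨β, hβ⟩ := hsat
  refine ⟨fun p => if p.2 = 2 then !(β p.1) else β p.1, ?_, ?_⟩
  · intro j i c hc
    obtain ⟨⟨v, hv, hvt⟩, ⟨w, hw, hwf⟩⟩ := hβ i c hc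
    by_cases hj : j = 2
    · exact ⟨⟨(w, j), Finset.mem_image_of_mem _ hw, by simp [hj, hwf]⟩,
        ⟨(v, j), Finset.mem_image_of_mem _ hv, by simp [hj, hvt]⟩⟩
    · exact ⟨⟨(v, j), Finset.mem_image_of_mem _ hv, by simp [hj, hvt]⟩,
        ⟨(w, j), Finset.mem_image_of_mem _ hw, by simp [hj, hwf]⟩⟩
  · intro x
    cases h : β x
    · exact ⟨⟨(x, 2), by simp, by simp [h]⟩, ⟨(x, 0), by simp, by simp [h]⟩⟩
    · exact ⟨⟨(x, 0), by simp, by simp [h]⟩, ⟨(x, 2), by simp, by simp [h]⟩⟩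
end

section
/- With the notation of the tripling construction: if C(1) ∪ C(2) ∪ C(3) ∪ D is nae-satisfiable (where C(j) are three disjoint renamed copies of a clause collection C and D = {{x1,x2,x3} : x ∈ V}), then C is nae-satisfiable. -/
/-- Converse direction of the tripling construction: if the three renamed
    copies of C together with the clauses `{x₁, x₂, x₃}` are nae-satisfiable,
    then C is nae-satisfiable. -/
theorem tripling_construction_converse
    {V : Type*} [DecidableEq V] (C : Finset (Finset V))
    (hsat : ∃ β' : V × Fin 3 → Bool,
      (∀ j : Fin 3, ∀ c ∈ C, naeSat β' (c.image (fun x => (x, j)))) ∧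
      (∀ x : V, naeSat β' ({(x, 0), (x, 1), (x, 2)} : Finset (V × Fin 3)))) :
    ∃ β : V → Bool, ∀ c ∈ C, naeSat β c := by
  obtain ⟨β', h1, _⟩ := hsat
  refine ⟨fun x => β' (x, 0), fun c hc => ?_⟩
  obtain ⟨⟨v, hv, hvt⟩, ⟨w, hw, hwf⟩⟩ := h1 0 c hc
  simp only [Finset.mem_image] at hv hw
  obtain ⟨a, ha, rfl⟩ := hv
  obtain ⟨b, hb, rfl⟩ := hw
  exact ⟨⟨a, ha, hvt⟩, ⟨b, hb, hwf⟩⟩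
end

section
/- In the no-instance of Proposition 1 (the twelve clauses over a,...,i), under any assignment β with β(a) = true and β(b) = β(c) = false that nae-satisfies clauses {a,d,g}, {c,e,g}, {a,e,h}, {c,f,h}, {a,f,i}, {c,d,i}, it must hold that β(d) = β(e) = β(f). Consequently the clause {d,e,f} is not nae-satisfied. -/
/-- In the no-instance of Proposition 1: with a = true, b = c = false, any
    assignment nae-satisfying {a,d,g}, {c,e,g}, {a,e,h}, {c,f,h}, {a,f,i},
    {c,d,i} forces d = e = f, so {d,e,f} is not nae-satisfied. -/
theorem proposition_one_case_a (a b c d e f g h i : Bool)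
    (ha : a = true) (hb : b = false) (hc : c = false)
    (h1 : nae3 a d g) (h2 : nae3 c e g)
    (h3 : nae3 a e h) (h4 : nae3 c f h)
    (h5 : nae3 a f i) (h6 : nae3 c d i) :
    (d = e ∧ e = f) ∧ ¬ nae3 d e f := by
  subst ha hb hc
  simp only [nae3] at *
  cases d <;> cases e <;> cases f <;> cases g <;> cases h <;> cases i <;> simp_all
end
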